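/- arXiv:2306.01801 — 4 statements merged into one kernel-verified Lean document; each statement's English description precedes it below -/
import Mathlib

section
/- The parameter map g of the factorized (low-rank) CDM is an involution: for every parameter quadruple θ = (δ, β, T, C), one has g(g(θ)) = θ. Consequently g is invertible with inverse g⁻¹ = g. -/
/-- The parameter map `g` of the factorized (low-rank) CDM, sending `(δ, β, T, C)` to
`({δ_i + t_iᵀ (Σ_{j ≠ i} c_j)}_i, β, T, −C)`. -/
noncomputable def cdmG (𝒰 : Type*) [Fintype 𝒰] [DecidableEq 𝒰] (d r : ℕ) :
    ((𝒰 → ℝ) × (Fin d → ℝ) × (𝒰 → Fin r → ℝ) × (𝒰 → Fin r → ℝ)) →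
      ((𝒰 → ℝ) × (Fin d → ℝ) × (𝒰 → Fin r → ℝ) × (𝒰 → Fin r → ℝ)) :=
  fun θ =>
    (fun i => θ.1 i + ∑ k, θ.2.2.1 i k * ∑ j ∈ Finset.univ.erase i, θ.2.2.2 j k,
      θ.2.1, θ.2.2.1, fun j k => -θ.2.2.2 j k)

/-!
Since `g` leaves `T` fixed and negates `C`, it suffices that the shift `δ_i ↦ δ_i + t_iᵀ Σ_{j ≠ i} c_j`
is linear, hence odd, in `C`: applying `g` twice adds the shift for `C` and then for `−C`,
which cancel.
-/

open Finset

section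
variable {𝒰 : Type*} [Fintype 𝒰] [DecidableEq 𝒰] {r : ℕ}

noncomputable def cdmShift (T C : 𝒰 → Fin r → ℝ) (i : 𝒰) : ℝ :=
  ∑ k, T i k * ∑ j ∈ univ.erase i, C j k

theorem cdmShift_neg (T C : 𝒰 → Fin r → ℝ) : cdmShift T (-C) = -cdmShift T C := by
  funext i
  simp only [cdmShift, Pi.neg_apply, sum_neg_distrib, mul_neg]

theorem cdmG_apply (d : ℕ) (δ : 𝒰 → ℝ) (β : Fin d → ℝ) (T C : 𝒰 → Fin r → ℝ) :
    cdmG 𝒰 d r (δ, β, T, C) = (δ + cdmShift T C, β, T, -C) :=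
  rfl

theorem involutive_cdmG (d : ℕ) : Function.Involutive (cdmG 𝒰 d r) := by
  rintro ⟨δ, β, T, C⟩
  rw [cdmG_apply, cdmG_apply, cdmShift_neg, neg_neg, add_neg_cancel_right]

end

/-- The parameter map `g` of the factorized (low-rank) CDM is an involution: `g (g θ) = θ`
for all parameter quadruples `θ = (δ, β, T, C)`.  Consequently `g` is invertible with inverse
`g⁻¹ = g`. -/
theorem cdmG_involutive (𝒰 : Type*) [Fintype 𝒰] [DecidableEq 𝒰] (d r : ℕ) :
    (∀ θ : (𝒰 → ℝ) × (Fin d → ℝ) × (𝒰 → Fin r → ℝ) × (𝒰 → Fin r → ℝ),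
        cdmG 𝒰 d r (cdmG 𝒰 d r θ) = θ) ∧
      Function.Bijective (cdmG 𝒰 d r) ∧
      Function.LeftInverse (cdmG 𝒰 d r) (cdmG 𝒰 d r) ∧
      Function.RightInverse (cdmG 𝒰 d r) (cdmG 𝒰 d r) :=
  have h := involutive_cdmG (𝒰 := 𝒰) (r := r) d
  ⟨h, h.bijective, h.leftInverse, h.rightInverse⟩
end

section
/- For every factorized CDM parameter θ = (δ, β, T, C), every covariate function x : 𝒰 → ℝ^d, every choice set S ⊆ 𝒰, and every alternative j ∈ S, the forward-dependent representative utility under θ equals the backward-dependent representative utility under g(θ): writing g(θ) = (δ', β', T', C') with δ'_i = δ_i + t_i^T (Σ_{l ∈ 𝒰, l ≠ i} c_l), β' = β, T' = T, and c'_l = −c_l, one has δ_j + β·x_j + t_j^T (Σ_{l ∈ S, l ≠ j} c_l) = δ'_j + β'·x_j + (t'_j)^T (Σ_{l ∈ 𝒰 \ S} c'_l). -/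
/-- For every factorized (low-rank) CDM parameter `θ = (δ, β, T, C)`, covariates `x`,
choice set `S`, and alternative `j ∈ S`, the forward-dependent representative utility under
`θ` equals the backward-dependent representative utility under `g(θ) = (δ', β', T', C')`,
where `δ'_i = δ_i + t_iᵀ (Σ_{l ≠ i} c_l)`, `β' = β`, `T' = T`, `c'_l = −c_l`:
`δ_j + β·x_j + t_jᵀ (Σ_{l ∈ S, l ≠ j} c_l) = δ'_j + β'·x_j + t'_jᵀ (Σ_{l ∈ 𝒰 \ S} c'_l)`. -/
theorem lowrank_cdm_forward_eq_backward_utility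
    (𝒰 : Type*) [Fintype 𝒰] [DecidableEq 𝒰] (d r : ℕ)
    (δ : 𝒰 → ℝ) (β : Fin d → ℝ) (t c : 𝒰 → Fin r → ℝ)
    (x : 𝒰 → Fin d → ℝ) (S : Finset 𝒰) (j : 𝒰) (hj : j ∈ S)
    (δ' : 𝒰 → ℝ) (β' : Fin d → ℝ) (t' c' : 𝒰 → Fin r → ℝ)
    (hδ' : ∀ i, δ' i = δ i + ∑ k, t i k * ∑ l ∈ Finset.univ.erase i, c l k)
    (hβ' : β' = β)
    (ht' : t' = t)
    (hc' : ∀ l k, c' l k = -c l k) :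
    δ j + (∑ i, β i * x j i) + (∑ k, t j k * ∑ l ∈ S.erase j, c l k)
      = δ' j + (∑ i, β' i * x j i) + (∑ k, t' j k * ∑ l ∈ Sᶜ, c' l k) := by
  subst hβ' ht'
  have key : ∀ k, ∑ l ∈ Finset.univ.erase j, c l k
      = ∑ l ∈ S.erase j, c l k + ∑ l ∈ Sᶜ, c l k := by
    intro k
    have hdis : Disjoint (S.erase j) Sᶜ := by
      refine Finset.disjoint_left.2 fun a ha hb => ?_
      exact (Finset.mem_compl.1 hb) (Finset.mem_of_mem_erase ha)
    rw [← Finset.sum_union hdis]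
    apply Finset.sum_congr _ fun _ _ => rfl
    ext a
    simp only [Finset.mem_erase, Finset.mem_union, Finset.mem_compl, Finset.mem_univ,
      and_true]
    constructor
    · intro h
      by_cases haS : a ∈ S
      · exact Or.inl ⟨h, haS⟩
      · exact Or.inr haS
    · rintro (⟨h, _⟩ | h)
      · exact h
      · rintro rfl; exact h hj
  rw [hδ' j]
  simp only [hc', mul_neg, Finset.sum_neg_distrib, key]
  ring_nf
  simp [Finset.mul_sum, Finset.sum_add_distrib, mul_add]
  ring
end

section
/- (Theorem 1) The forward- and backward-dependent unfactorized CDM ranking models are equivalent under the bijection f: for every parameter θ = (δ, β, U), every covariate function x : 𝒰 → ℝ^d, every choice set S ⊆ 𝒰 with |S| ≥ 2, and every j ∈ S, the forward-dependent choice probability under θ equals the backward-dependent choice probability under f(θ), i.e. exp(V^F_θ(j|S)) / Σ_{k ∈ S} exp(V^F_θ(k|S)) = exp(V^B_{f(θ)}(j|S)) / Σ_{k ∈ S} exp(V^B_{f(θ)}(k|S)). -/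
open Finset

/-- Forward-dependent representative utility of the unfactorized CDM:
`V^F_θ(j|S) = δ_j + β·x_j + Σ_{l ∈ S, l ≠ j} u_{jl}`. -/
noncomputable def VF {𝒰 : Type*} [DecidableEq 𝒰] {d : ℕ}
    (δ : 𝒰 → ℝ) (β : Fin d → ℝ) (u : 𝒰 → 𝒰 → ℝ)
    (x : 𝒰 → Fin d → ℝ) (S : Finset 𝒰) (j : 𝒰) : ℝ :=
  δ j + (∑ i, β i * x j i) + ∑ l ∈ S.erase j, u j l

/-- Backward-dependent representative utility of the unfactorized CDM:
`V^B_θ(j|S) = δ_j + β·x_j + Σ_{l ∈ 𝒰 \ S} u_{jl}`. -/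
noncomputable def VB {𝒰 : Type*} [Fintype 𝒰] [DecidableEq 𝒰] {d : ℕ}
    (δ : 𝒰 → ℝ) (β : Fin d → ℝ) (u : 𝒰 → 𝒰 → ℝ)
    (x : 𝒰 → Fin d → ℝ) (S : Finset 𝒰) (j : 𝒰) : ℝ :=
  δ j + (∑ i, β i * x j i) + ∑ l ∈ Sᶜ, u j l

/-- The parameter map `f` of the unfactorized CDM, sending `(δ, β, U)` to
`({δ_i + Σ_{j ≠ i} u_{ij}}_i, β, −U)`. -/
noncomputable def cdmF (𝒰 : Type*) [Fintype 𝒰] [DecidableEq 𝒰] (d : ℕ) :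
    ((𝒰 → ℝ) × (Fin d → ℝ) × (𝒰 → 𝒰 → ℝ)) → ((𝒰 → ℝ) × (Fin d → ℝ) × (𝒰 → 𝒰 → ℝ)) :=
  fun θ =>
    (fun i => θ.1 i + ∑ j ∈ Finset.univ.erase i, θ.2.2 i j, θ.2.1, fun i j => -θ.2.2 i j)

/-! The row sums added to `δ` by `f` split, for `k ∈ S`, into the sum over `S \ {k}` and the sum
over `𝒰 \ S`; negating `U` cancels the latter, so on `S` the backward utilities under `f(θ)` are
literally the forward utilities under `θ`, and the two softmax distributions agree. -/

theorem Finset.sum_univ_erase_eq_sum_erase_add_sum_compl {α M : Type*} [Fintype α]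
    [DecidableEq α] [AddCommGroup M] (f : α → M) {S : Finset α} {k : α} (hk : k ∈ S) :
    ∑ l ∈ univ.erase k, f l = ∑ l ∈ S.erase k, f l + ∑ l ∈ Sᶜ, f l := by
  rw [sum_erase_eq_sub (mem_univ k), sum_erase_eq_sub hk, ← sum_add_sum_compl S f]
  abel

theorem VB_cdmF_eq_VF {𝒰 : Type*} [Fintype 𝒰] [DecidableEq 𝒰] {d : ℕ}
    (θ : (𝒰 → ℝ) × (Fin d → ℝ) × (𝒰 → 𝒰 → ℝ)) (x : 𝒰 → Fin d → ℝ) {S : Finset 𝒰} {k : 𝒰}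
    (hk : k ∈ S) :
    VB (cdmF 𝒰 d θ).1 (cdmF 𝒰 d θ).2.1 (cdmF 𝒰 d θ).2.2 x S k = VF θ.1 θ.2.1 θ.2.2 x S k := by
  simp only [VB, VF, cdmF, sum_neg_distrib,
    sum_univ_erase_eq_sum_erase_add_sum_compl (θ.2.2 k) hk]
  ring

theorem cdm_forward_eq_backward_prob_general
    (𝒰 : Type*) [Fintype 𝒰] [DecidableEq 𝒰] (d : ℕ)
    (θ : (𝒰 → ℝ) × (Fin d → ℝ) × (𝒰 → 𝒰 → ℝ))
    (x : 𝒰 → Fin d → ℝ) (S : Finset 𝒰) (j : 𝒰) (hj : j ∈ S) :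
    Real.exp (VF θ.1 θ.2.1 θ.2.2 x S j) / ∑ k ∈ S, Real.exp (VF θ.1 θ.2.1 θ.2.2 x S k)
      = Real.exp (VB (cdmF 𝒰 d θ).1 (cdmF 𝒰 d θ).2.1 (cdmF 𝒰 d θ).2.2 x S j) /
          ∑ k ∈ S, Real.exp (VB (cdmF 𝒰 d θ).1 (cdmF 𝒰 d θ).2.1 (cdmF 𝒰 d θ).2.2 x S k) := by
  rw [VB_cdmF_eq_VF θ x hj, 
    sum_congr rfl fun k hk => congrArg Real.exp (VB_cdmF_eq_VF θ x hk)]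

/-- (Theorem 1) The forward- and backward-dependent unfactorized CDM ranking models are
equivalent under the bijection `f`: for every `θ = (δ, β, U)`, covariates `x`, choice set
`S` with `|S| ≥ 2`, and `j ∈ S`, the forward-dependent choice probability under `θ` equals
the backward-dependent choice probability under `f(θ)`. -/
theorem cdm_forward_eq_backward_prob
    (𝒰 : Type*) [Fintype 𝒰] [DecidableEq 𝒰] (d : ℕ)
    (θ : (𝒰 → ℝ) × (Fin d → ℝ) × (𝒰 → 𝒰 → ℝ))
    (x : 𝒰 → Fin d → ℝ) (S : Finset 𝒰) (hS : 2 ≤ S.card) (j : 𝒰) (hj : j ∈ S) :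
    Real.exp (VF θ.1 θ.2.1 θ.2.2 x S j) / ∑ k ∈ S, Real.exp (VF θ.1 θ.2.1 θ.2.2 x S k)
      = Real.exp (VB (cdmF 𝒰 d θ).1 (cdmF 𝒰 d θ).2.1 (cdmF 𝒰 d θ).2.2 x S j) /
          ∑ k ∈ S, Real.exp (VB (cdmF 𝒰 d θ).1 (cdmF 𝒰 d θ).2.1 (cdmF 𝒰 d θ).2.2 x S k) :=
  cdm_forward_eq_backward_prob_general 𝒰 d θ x S j hj
end

section
/- The forward- and backward-dependent unfactorized CDM model classes coincide: for every parameter θ_F = (δ, β, U) there exists a parameter θ_B such that for all covariates x : 𝒰 → ℝ^d, all choice sets S ⊆ 𝒰 with |S| ≥ 2, and all j ∈ S, the forward-dependent choice probability under θ_F equals the backward-dependent choice probability under θ_B; and conversely, for every θ_B there exists θ_F with the same property. -/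
open Finset

/-!
For `j ∈ S` the off-diagonal row sum `Σ_{l ≠ j} u_{jl}` splits into the sum over `S \ {j}` and the
sum over `𝒰 \ S`. Hence replacing `u` by `-u` and absorbing the whole row sum into `δ_j` turns the
forward-dependent utility into the backward-dependent one and vice versa, exactly and for every
`j ∈ S`; equal utilities on `S` give equal logit choice probabilities.
-/

section

variable {𝒰 : Type*} [Fintype 𝒰] [DecidableEq 𝒰]

theorem Finset.sum_erase_univ_eq_sum_erase_add_sum_compl {M : Type*} [AddCommGroup M]
    (f : 𝒰 → M) {S : Finset 𝒰} {j : 𝒰} (hj : j ∈ S) :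
    ∑ l ∈ univ.erase j, f l = ∑ l ∈ S.erase j, f l + ∑ l ∈ Sᶜ, f l := by
  rw [sum_erase_eq_sub (mem_univ j), sum_erase_eq_sub hj, ← sum_add_sum_compl S f]
  abel

def absorbRowSums (δ : 𝒰 → ℝ) (u : 𝒰 → 𝒰 → ℝ) (a : 𝒰) : ℝ :=
  δ a + ∑ l ∈ univ.erase a, u a l

variable {d : ℕ} (δ : 𝒰 → ℝ) (β : Fin d → ℝ) (u : 𝒰 → 𝒰 → ℝ) (x : 𝒰 → Fin d → ℝ)
  {S : Finset 𝒰} {j : 𝒰}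

theorem VB_absorbRowSums_neg (hj : j ∈ S) :
    VB (absorbRowSums δ u) β (-u) x S j = VF δ β u x S j := by
  simp only [VB, VF, absorbRowSums, Pi.neg_apply, sum_neg_distrib,
    sum_erase_univ_eq_sum_erase_add_sum_compl (u j) hj]
  ring

theorem VF_absorbRowSums_neg (hj : j ∈ S) :
    VF (absorbRowSums δ u) β (-u) x S j = VB δ β u x S j := by
  simp only [VB, VF, absorbRowSums, Pi.neg_apply, sum_neg_distrib,
    sum_erase_univ_eq_sum_erase_add_sum_compl (u j) hj]
  ring

end

theorem exp_div_sum_exp_congr {ι : Type*} {S : Finset ι} {V W : ι → ℝ} (h : Set.EqOn V W S)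
    (j : ι) (hj : j ∈ S) :
    Real.exp (V j) / ∑ k ∈ S, Real.exp (V k) = Real.exp (W j) / ∑ k ∈ S, Real.exp (W k) := by
  rw [h hj, sum_congr rfl fun k hk => by rw [h hk]]

/-- The forward- and backward-dependent unfactorized CDM model classes coincide: every
forward-dependent parameter has a backward-dependent counterpart inducing identical choice
probabilities on all choice sets of size ≥ 2, and conversely. -/
theorem cdm_model_classes_coincide (𝒰 : Type*) [Fintype 𝒰] [DecidableEq 𝒰] (d : ℕ) :
    (∀ (δF : 𝒰 → ℝ) (βF : Fin d → ℝ) (uF : 𝒰 → 𝒰 → ℝ),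
      ∃ (δB : 𝒰 → ℝ) (βB : Fin d → ℝ) (uB : 𝒰 → 𝒰 → ℝ),
        ∀ (x : 𝒰 → Fin d → ℝ) (S : Finset 𝒰), 2 ≤ S.card → ∀ j ∈ S,
          Real.exp (VF δF βF uF x S j) / (∑ k ∈ S, Real.exp (VF δF βF uF x S k))
            = Real.exp (VB δB βB uB x S j) / (∑ k ∈ S, Real.exp (VB δB βB uB x S k))) ∧
    (∀ (δB : 𝒰 → ℝ) (βB : Fin d → ℝ) (uB : 𝒰 → 𝒰 → ℝ),
      ∃ (δF : 𝒰 → ℝ) (βF : Fin d → ℝ) (uF : 𝒰 → 𝒰 → ℝ),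
        ∀ (x : 𝒰 → Fin d → ℝ) (S : Finset 𝒰), 2 ≤ S.card → ∀ j ∈ S,
          Real.exp (VF δF βF uF x S j) / (∑ k ∈ S, Real.exp (VF δF βF uF x S k))
            = Real.exp (VB δB βB uB x S j) / (∑ k ∈ S, Real.exp (VB δB βB uB x S k))) := by
  refine ⟨fun δ β u => ⟨absorbRowSums δ u, β, -u, fun x S _ => ?_⟩,
    fun δ β u => ⟨absorbRowSums δ u, β, -u, fun x S _ => ?_⟩⟩
  · exact exp_div_sum_exp_congr fun k hk => (VB_absorbRowSums_neg δ β u x hk).symm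
  · exact exp_div_sum_exp_congr fun k hk => VF_absorbRowSums_neg δ β u x hk
end
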